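/- arXiv:2011.04889 — 3 statements merged into one kernel-verified Lean document; each statement's English description precedes it below -/
import Mathlib

section
/- For F a distribution with finite first moment and 0 ≤ a < b ≤ 1, the left-quantile function of the (a,b)-concentration F^{(a,b)} equals F^{-1}(t) for t ∉ (a,b] and equals (1/(b-a))·∫_a^b F^{-1}(u) du for t ∈ (a,b]. -/
open MeasureTheory Set Classical

/-- Left-quantile function of a distribution on ℝ. -/
noncomputable def leftQuantile (μ : Measure ℝ) (p : ℝ) : ℝ :=
  sInf {x : ℝ | p ≤ (μ (Iic x)).toReal}

/-- The uniform distribution on [0,1]. -/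
noncomputable def unif01 : Measure ℝ := volume.restrict (Icc (0:ℝ) 1)

/-- The C-concentration of a distribution: the law of
`F⁻¹(U)·1_{U∉C} + E[F⁻¹(U) | U∈C]·1_{U∈C}` with `U` uniform on [0,1]. -/

noncomputable def concentration (μ : Measure ℝ) (C : Set ℝ) : Measure ℝ :=
  Measure.map
    (fun u => if u ∈ C then (∫ t in C, leftQuantile μ t) / (volume C).toReal
      else leftQuantile μ u) unif01

/-!
The concentration is the law of `g(U)` for the map `g` that replaces `F⁻¹` on `(a,b)` by its
average `m`. Since `F⁻¹` is monotone, `F⁻¹(a) ≤ m ≤ F⁻¹(b)`, so `g` is monotone on `(0,1)`, and for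
a monotone `g` the left quantile of the law of `g(U)` at `t` is the left limit `sup_{s<t} g(s)`.
For `t ∈ (a,b]` this supremum is `m`; otherwise `g` agrees with `F⁻¹` just left of `t`, and the
same formula applied to `g = F⁻¹` (whose law is `F`) gives `F⁻¹(t)`.
-/

open ProbabilityTheory Filter Topology

section Order

variable {α β : Type*} [LinearOrder α] [Preorder β]

theorem MonotoneOn.ite_Ioo {f : α → β} {s : Set α} {a b : α} {m : β}
    [dec : ∀ u, Decidable (u ∈ Ioo a b)] (hf : MonotoneOn f s)
    (hle : ∀ u ∈ s, u ≤ a → f u ≤ m) (hge : ∀ u ∈ s, b ≤ u → m ≤ f u) :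
    MonotoneOn (fun u => if u ∈ Ioo a b then m else f u) s := by
  intro u hu v hv huv
  dsimp only
  split_ifs with hu' hv' hv'
  · exact le_rfl
  · exact hge v hv (not_lt.1 fun hvb => hv' ⟨hu'.1.trans_le huv, hvb⟩)
  · exact hle u hu (not_lt.1 fun hau => hu' ⟨hau, huv.trans_lt hv'.2⟩)
  · exact hf hu hv huv

variable [DenselyOrdered α] {p q : α}

theorem MonotoneOn.isGreatest_image_Ioo {g : α → β} {a : α} {m : β} (hg : MonotoneOn g (Ioo p q))
    (hpa : p ≤ a) (haq : a < q) (hm : ∀ u ∈ Ioo a q, g u = m) : IsGreatest (g '' Ioo p q) m := by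
  obtain ⟨c, hac, hcq⟩ := exists_between haq
  have hc : c ∈ Ioo p q := ⟨hpa.trans_lt hac, hcq⟩
  refine ⟨⟨c, hc, hm c ⟨hac, hcq⟩⟩, ?_⟩
  rintro _ ⟨u, hu, rfl⟩
  rcases le_or_gt u a with hua | hau
  · exact hm c ⟨hac, hcq⟩ ▸ hg hu hc (hua.trans hac.le)
  · exact (hm u ⟨hau, hu.2⟩).le

theorem MonotoneOn.upperBounds_image_Ioo_eq {f : α → β} {c : α} (hf : MonotoneOn f (Ioo p q))
    (hc : c ∈ Ico p q) : upperBounds (f '' Ioo p q) = upperBounds (f '' Ioo c q) := by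
  refine (upperBounds_mono_set (image_mono (Ioo_subset_Ioo_left hc.1))).antisymm fun x hx => ?_
  rintro _ ⟨u, hu, rfl⟩
  obtain ⟨v, hv, hvq⟩ := exists_between (max_lt hc.2 hu.2)
  have hcv : c < v := (le_max_left _ _).trans_lt hv
  exact (hf hu ⟨hc.1.trans_lt hcv, hvq⟩ ((le_max_right _ _).trans hv.le)).trans
    (hx ⟨v, ⟨hcv, hvq⟩, rfl⟩)

theorem upperBounds_image_Ioo_eq_of_eqOn {f g : α → β} {c : α} (hf : MonotoneOn f (Ioo p q))
    (hg : MonotoneOn g (Ioo p q)) (hc : c ∈ Ico p q) (hfg : EqOn f g (Ioo c q)) :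
    upperBounds (f '' Ioo p q) = upperBounds (g '' Ioo p q) := by
  rw [hf.upperBounds_image_Ioo_eq hc, hg.upperBounds_image_Ioo_eq hc, hfg.image_eq]

end Order

theorem le_setIntegral_Ioo_div {f : ℝ → ℝ} {a b c : ℝ} (hab : a < b)
    (hf : IntegrableOn f (Ioo a b)) (h : ∀ u ∈ Ioo a b, c ≤ f u) :
    c ≤ (∫ u in Ioo a b, f u) / (b - a) := by
  have := setIntegral_mono_on (integrableOn_const measure_Ioo_lt_top.ne) hf measurableSet_Ioo h
  rw [le_div_iff₀ (sub_pos.2 hab)]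
  simpa [Real.volume_Ioo, hab.le, mul_comm] using this

theorem setIntegral_Ioo_div_le {f : ℝ → ℝ} {a b c : ℝ} (hab : a < b)
    (hf : IntegrableOn f (Ioo a b)) (h : ∀ u ∈ Ioo a b, f u ≤ c) :
    (∫ u in Ioo a b, f u) / (b - a) ≤ c := by
  have := setIntegral_mono_on hf (integrableOn_const measure_Ioo_lt_top.ne) measurableSet_Ioo h
  rw [div_le_iff₀ (sub_pos.2 hab)]
  simpa [Real.volume_Ioo, hab.le, mul_comm] using this

theorem MonotoneOn.ite_Ioo_average {f : ℝ → ℝ} {p q a b : ℝ} [dec : ∀ u, Decidable (u ∈ Ioo a b)]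
    (hf : MonotoneOn f (Ioo p q)) (hint : IntegrableOn f (Ioo a b)) (hpa : p ≤ a) (hab : a < b)
    (hbq : b ≤ q) :
    MonotoneOn (fun u => if u ∈ Ioo a b then (∫ v in Ioo a b, f v) / (b - a) else f u)
      (Ioo p q) :=
  hf.ite_Ioo
    (fun _ hu hua => le_setIntegral_Ioo_div hab hint fun _ hv =>
      hf hu ⟨hu.1.trans_le (hua.trans hv.1.le), hv.2.trans_le hbq⟩ (hua.trans hv.1.le))
    (fun _ hu hbu => setIntegral_Ioo_div_le hab hint fun _ hv =>
      hf ⟨hpa.trans_lt hv.1, hv.2.trans_le hbq⟩ hu (hv.2.le.trans hbu))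

theorem unif01_eq_restrict_Ioo : unif01 = volume.restrict (Ioo 0 1) :=
  (Measure.restrict_congr_set Ioo_ae_eq_Icc).symm

theorem leftQuantile_map_unif01 {g : ℝ → ℝ} (hg : MonotoneOn g (Ioo 0 1)) {t : ℝ} (ht1 : t ≤ 1) :
    leftQuantile (unif01.map g) t = sInf (upperBounds (g '' Ioo 0 t)) := by
  rw [leftQuantile]
  congr 1
  ext x
  set S := g ⁻¹' Iic x ∩ Ioo 0 1
  have hS : volume S ≠ ⊤ := ((measure_mono inter_subset_right).trans_lt measure_Ioo_lt_top).ne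
  rw [mem_ofPred_eq, unif01_eq_restrict_Ioo, Measure.map_apply_of_aemeasurable
    (aemeasurable_restrict_of_monotoneOn measurableSet_Ioo hg) measurableSet_Iic,
    Measure.restrict_apply' measurableSet_Ioo, ← ENNReal.ofReal_le_iff_le_toReal hS,
    mem_upperBounds, forall_mem_image]
  constructor
  · intro htS s hs
    by_contra! hxs
    have hSs : S ⊆ Ioo 0 s := fun u ⟨hu, hu01⟩ => ⟨hu01.1, lt_of_not_ge fun hsu =>
      hxs.not_ge ((hg ⟨hs.1, hs.2.trans_le ht1⟩ hu01 hsu).trans hu)⟩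
    have := htS.trans ((measure_mono hSs).trans_eq (Real.volume_Ioo))
    rw [sub_zero, ENNReal.ofReal_le_ofReal_iff hs.1.le] at this
    exact this.not_gt hs.2
  · intro hx
    calc ENNReal.ofReal t = volume (Ioo 0 t) := by rw [Real.volume_Ioo, sub_zero]
    _ ≤ volume S := measure_mono fun s hs => ⟨hx hs, hs.1, hs.2.trans_le ht1⟩

section Quantile

variable {μ : Measure ℝ}

theorem leftQuantile_of_nonpos {p : ℝ} (hp : p ≤ 0) : leftQuantile μ p = 0 := by
  have : {x : ℝ | p ≤ (μ (Iic x)).toReal} = univ :=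
    eq_univ_of_forall fun _ => hp.trans ENNReal.toReal_nonneg
  rw [leftQuantile, this, Real.sInf_of_not_bddBelow not_bddBelow_univ]

theorem nonempty_setOf_le_cdf {p : ℝ} (hp : p < 1) : {x | p ≤ cdf μ x}.Nonempty :=
  ((tendsto_cdf_atTop μ).eventually (eventually_ge_nhds hp)).exists

theorem bddBelow_setOf_le_cdf {p : ℝ} (hp : 0 < p) : BddBelow {x | p ≤ cdf μ x} := by
  obtain ⟨x₀, hx₀⟩ := ((tendsto_cdf_atBot μ).eventually (eventually_lt_nhds hp)).exists
  exact ⟨x₀, fun x hx => le_of_not_gt fun hxx₀ => (hx.trans (monotone_cdf μ hxx₀.le)).not_gt hx₀⟩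

variable [IsProbabilityMeasure μ]

theorem leftQuantile_eq_sInf_cdf (p : ℝ) : leftQuantile μ p = sInf {x | p ≤ cdf μ x} := by
  simp only [leftQuantile, cdf_eq_real, measureReal_def]

theorem le_cdf_leftQuantile {p : ℝ} (hp0 : 0 < p) (hp1 : p < 1) :
    p ≤ cdf μ (leftQuantile μ p) := by
  rw [leftQuantile_eq_sInf_cdf]
  set q := sInf {x | p ≤ cdf μ x}
  have hright : ∀ x ∈ Ioi q, p ≤ cdf μ x := fun x hx => by
    obtain ⟨y, hy, hyx⟩ := (csInf_lt_iff (bddBelow_setOf_le_cdf hp0) (nonempty_setOf_le_cdf hp1)).1 hx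
    exact hy.trans (monotone_cdf μ hyx.le)
  exact ge_of_tendsto (((cdf μ).right_continuous q).tendsto.mono_left
    (nhdsWithin_mono _ Ioi_subset_Ici_self)) (eventually_nhdsWithin_of_forall hright)

theorem leftQuantile_le_iff {p x : ℝ} (hp0 : 0 < p) (hp1 : p < 1) :
    leftQuantile μ p ≤ x ↔ p ≤ cdf μ x :=
  ⟨fun h => (le_cdf_leftQuantile hp0 hp1).trans (monotone_cdf μ h),
    fun h => (leftQuantile_eq_sInf_cdf p).trans_le (csInf_le (bddBelow_setOf_le_cdf hp0) h)⟩

theorem monotoneOn_leftQuantile : MonotoneOn (leftQuantile μ) (Ioo 0 1) :=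
  fun _ hp _ hq hpq => (leftQuantile_le_iff hp.1 hp.2).2 (hpq.trans (le_cdf_leftQuantile hq.1 hq.2))

theorem map_leftQuantile_unif01 : unif01.map (leftQuantile μ) = μ := by
  rw [unif01_eq_restrict_Ioo]
  refine Measure.ext_of_Iic _ _ fun x => ?_
  have hsub : Ioo 0 (cdf μ x) ⊆ leftQuantile μ ⁻¹' Iic x ∩ Ioo 0 1 := fun u hu =>
    have hu1 := hu.2.trans_le (cdf_le_one μ x)
    ⟨(leftQuantile_le_iff hu.1 hu1).2 hu.2.le, hu.1, hu1⟩
  have hsup : leftQuantile μ ⁻¹' Iic x ∩ Ioo 0 1 ⊆ Ioc 0 (cdf μ x) := fun u ⟨hu, hu01⟩ =>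
    ⟨hu01.1, (leftQuantile_le_iff hu01.1 hu01.2).1 hu⟩
  rw [Measure.map_apply_of_aemeasurable (aemeasurable_restrict_of_monotoneOn measurableSet_Ioo
    monotoneOn_leftQuantile) measurableSet_Iic, Measure.restrict_apply' measurableSet_Ioo,
    ← ofReal_cdf]
  refine le_antisymm ((measure_mono hsup).trans_eq ?_) ((measure_mono hsub).trans_eq' ?_) <;>
    simp

theorem integrableOn_leftQuantile (hμ : Integrable id μ) :
    IntegrableOn (leftQuantile μ) (Ioo 0 1) := by
  rw [← map_leftQuantile_unif01 (μ := μ), unif01_eq_restrict_Ioo] at hμ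
  exact (integrable_map_measure aestronglyMeasurable_id
    (aemeasurable_restrict_of_monotoneOn measurableSet_Ioo monotoneOn_leftQuantile)).1 hμ

end Quantile

/-- the left-quantile function of the (a,b)-concentration. -/
theorem leftQuantile_concentration (μ : Measure ℝ) [IsProbabilityMeasure μ]
    (hμ : Integrable id μ) (a b : ℝ) (ha : 0 ≤ a) (hab : a < b) (hb : b ≤ 1) :
    ∀ t ∈ Icc (0:ℝ) 1,
      leftQuantile (concentration μ (Ioo a b)) t =
        if t ∈ Ioc a b then (∫ u in Ioo a b, leftQuantile μ u) / (b - a)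
        else leftQuantile μ t := by
  intro t ht
  rcases ht.1.eq_or_lt with rfl | ht0
  · rw [if_neg fun h => h.1.not_ge ha, leftQuantile_of_nonpos le_rfl,
      leftQuantile_of_nonpos le_rfl]
  have hF := monotoneOn_leftQuantile (μ := μ)
  have hint : IntegrableOn (leftQuantile μ) (Ioo a b) :=
    (integrableOn_leftQuantile hμ).mono_set (Ioo_subset_Ioo ha hb)
  -- `concentration` decides `u ∈ Ioo a b` classically, not by the order on `ℝ`
  have hg := hF.ite_Ioo_average (dec := fun _ => propDecidable _) hint ha hab hb
  have hgt := hg.mono (Ioo_subset_Ioo_right ht.2)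
  rw [concentration, Real.volume_Ioo, ENNReal.toReal_ofReal (sub_nonneg.2 hab.le),
    leftQuantile_map_unif01 hg ht.2]
  split_ifs with htab
  · rw [(hgt.isGreatest_image_Ioo ha htab.1 fun u hu => if_pos ⟨hu.1, hu.2.trans_le htab.2⟩)
      |>.isLUB.upperBounds_eq, csInf_Ici]
  · obtain ⟨c, hc, hout⟩ : ∃ c ∈ Ico 0 t, ∀ u ∈ Ioo c t, u ∉ Ioo a b := by
      rcases le_or_gt t a with hta | hbt
      · exact ⟨0, ⟨le_rfl, ht0⟩, fun u hu hu' => hu'.1.not_ge (hu.2.le.trans hta)⟩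
      · exact ⟨b, ⟨ha.trans hab.le, lt_of_not_ge fun htb => htab ⟨hbt, htb⟩⟩,
          fun u hu hu' => hu'.2.not_ge hu.1.le⟩
    rw [upperBounds_image_Ioo_eq_of_eqOn hgt (hF.mono (Ioo_subset_Ioo_right ht.2)) hc
      fun u hu => if_neg (hout u hu), ← leftQuantile_map_unif01 hF ht.2,
      map_leftQuantile_unif01]
end

section
/- There exists a set of distributions on ℝ with finite mean that is closed under concentration but not closed under conditional expectation. Hence closedness under concentration is strictly weaker than closedness under conditional expectation. -/
open MeasureTheory Set Classical

/-- A set of distributions is closed under concentration. -/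
def ClosedUnderConcentration (M : Set (Measure ℝ)) : Prop :=
  ∀ μ ∈ M, ∀ C : Set ℝ, C.OrdConnected → C ⊆ Icc 0 1 → concentration μ C ∈ M

/-- A set of distributions is closed under conditional expectation. -/
def ClosedUnderCondExp (M : Set (Measure ℝ)) : Prop :=
  ∀ (Ω : Type) [inst : MeasurableSpace Ω] (P : Measure Ω), IsProbabilityMeasure P →
    ∀ Y : Ω → ℝ, Measurable Y → Integrable Y P → Measure.map Y P ∈ M →
      ∀ m : MeasurableSpace Ω, m ≤ inst →
        @Measure.map Ω ℝ inst Real.measurableSpace (MeasureTheory.condExp m P Y) P ∈ M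

/-!
The finitely supported probability laws form such a set. If `μ` is carried by a finite set `S`,
its quantile function maps `(0, 1]` into `S`, so a concentration of `μ` takes, for a.e. `U`, only
values in `S` and the single value `E[F⁻¹(U) | U ∈ C]`. On the other hand, for `(U, V)` uniform on
the unit square, the `{0, 1}`-valued variable `1_{V < U}` has conditional expectation `U` given `U`,
whose uniform law has no atoms.
-/

def IsFinitelySupported (μ : Measure ℝ) : Prop :=
  ∃ S : Set ℝ, S.Finite ∧ ∀ᵐ x ∂μ, x ∈ S

section leftQuantile

variable {μ : Measure ℝ} {S : Set ℝ} {p : ℝ}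

lemma measure_Iic_eq_zero_of_lt_mem_lowerBounds (hμS : ∀ᵐ x ∂μ, x ∈ S) {c x : ℝ}
    (hc : c ∈ lowerBounds S) (hx : x < c) : μ (Iic x) = 0 := by
  rw [measure_eq_zero_iff_ae_notMem]
  filter_upwards [hμS] with y hy hyx using (hx.trans_le (hc hy)).not_ge hyx

lemma measure_Iic_eq_one_of_mem_upperBounds [IsProbabilityMeasure μ] (hμS : ∀ᵐ x ∂μ, x ∈ S)
    {b : ℝ} (hb : b ∈ upperBounds S) : μ (Iic b) = 1 := by
  rw [← prob_compl_eq_zero_iff measurableSet_Iic, measure_eq_zero_iff_ae_notMem]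
  filter_upwards [hμS] with y hy using not_not.2 (hb hy)

lemma bddBelow_setOf_le_measure_Iic (hS : BddBelow S) (hμS : ∀ᵐ x ∂μ, x ∈ S) (hp : 0 < p) :
    BddBelow {x | p ≤ (μ (Iic x)).toReal} := by
  obtain ⟨c, hc⟩ := hS
  refine ⟨c, fun x hx => not_lt.1 fun hxc => ?_⟩
  change p ≤ _ at hx
  rw [measure_Iic_eq_zero_of_lt_mem_lowerBounds hμS hc hxc] at hx
  exact hp.not_ge hx

lemma mem_setOf_le_measure_Iic_of_mem_upperBounds [IsProbabilityMeasure μ]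
    (hμS : ∀ᵐ x ∂μ, x ∈ S) {b : ℝ} (hb : b ∈ upperBounds S) (hp : p ≤ 1) :
    b ∈ {x | p ≤ (μ (Iic x)).toReal} := by
  change p ≤ _
  rwa [measure_Iic_eq_one_of_mem_upperBounds hμS hb, ENNReal.toReal_one]

lemma leftQuantile_monotoneOn [IsProbabilityMeasure μ] (hS : Bornology.IsBounded S)
    (hμS : ∀ᵐ x ∂μ, x ∈ S) : MonotoneOn (leftQuantile μ) (Ioc 0 1) := by
  intro p hp q hq hpq
  obtain ⟨b, hb⟩ := hS.bddAbove
  exact csInf_le_csInf (bddBelow_setOf_le_measure_Iic hS.bddBelow hμS hp.1)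
    ⟨b, mem_setOf_le_measure_Iic_of_mem_upperBounds hμS hb hq.2⟩ fun x hx => hpq.trans hx

lemma leftQuantile_mem [IsProbabilityMeasure μ] (hS : S.Finite) (hμS : ∀ᵐ x ∂μ, x ∈ S)
    (hp : p ∈ Ioc 0 1) : leftQuantile μ p ∈ S := by
  set T := {x | p ≤ (μ (Iic x)).toReal}
  set q := leftQuantile μ p
  obtain ⟨b, hb⟩ := hS.bddAbove
  have hT : T.Nonempty := ⟨b, mem_setOf_le_measure_Iic_of_mem_upperBounds hμS hb hp.2⟩
  have hqT : ∀ x ∈ T, q ≤ x := fun x =>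
    csInf_le (bddBelow_setOf_le_measure_Iic hS.bddBelow hμS hp.1)
  by_contra hq
  obtain ⟨ε, hε, hball⟩ := Metric.isOpen_iff.1 hS.isClosed.isOpen_compl q hq
  obtain ⟨t, htT, ht⟩ := exists_lt_of_csInf_lt hT (lt_add_of_pos_right q hε)
  -- `μ` does not charge `(q - ε / 2, t] ⊆ ball q ε`, so `q - ε / 2 ∈ T`, below `q = inf T`
  have hIic : μ (Iic (q - ε / 2)) = μ (Iic t) := by
    refine measure_congr (hμS.mono fun x hxS => propext ⟨fun hx => ?_, fun hx => ?_⟩)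
    · exact (show x ≤ q - ε / 2 from hx).trans (by linarith [hqT t htT])
    · refine not_lt.1 fun hlt => hball ?_ hxS
      rw [Metric.mem_ball, Real.dist_eq, abs_lt]
      exact ⟨by linarith, by linarith [show x ≤ t from hx]⟩
  have hmem : q - ε / 2 ∈ T := by
    change p ≤ _; rw [hIic]; exact htT
  linarith [hqT _ hmem]

end leftQuantile

instance : IsProbabilityMeasure unif01 :=
  ⟨by rw [unif01, Measure.restrict_apply_univ, Real.volume_Icc]; norm_num⟩

instance : NullSingletonClass unif01 := by
  rw [unif01]; infer_instance

lemma unif01_eq_restrict_Ioc : unif01 = volume.restrict (Ioc 0 1) :=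
  (Measure.restrict_congr_set Ioc_ae_eq_Icc).symm

lemma IsFinitelySupported.integrable_id {μ : Measure ℝ} [IsFiniteMeasure μ]
    (hμ : IsFinitelySupported μ) : Integrable id μ := by
  obtain ⟨S, hS, hμS⟩ := hμ
  obtain ⟨C, hC⟩ := hS.isBounded.exists_norm_le
  exact .of_bound aestronglyMeasurable_id C (hμS.mono hC)

lemma isFinitelySupported_map_indicator_one {Ω : Type*} [MeasurableSpace Ω] {P : Measure Ω}
    {A : Set Ω} (hA : MeasurableSet A) : IsFinitelySupported (P.map (A.indicator 1)) :=
  ⟨{0, 1}, toFinite _, (ae_map_iff (measurable_one.indicator hA).aemeasurable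
    (toFinite ({0, 1} : Set ℝ)).measurableSet).2 (ae_of_all _ (A.indicator_eq_zero_or_self 1))⟩

lemma not_isFinitelySupported (μ : Measure ℝ) [IsProbabilityMeasure μ] [NullSingletonClass μ] :
    ¬ IsFinitelySupported μ := by
  rintro ⟨S, hS, hμS⟩
  have h : μ S = μ univ := (ae_iff_measure_eq hS.measurableSet.nullMeasurableSet).1 hμS
  rw [hS.measure_zero, measure_univ] at h
  exact zero_ne_one h

lemma concentration_isProbabilityMeasure_and_isFinitelySupported {μ : Measure ℝ}
    [IsProbabilityMeasure μ] (hμ : IsFinitelySupported μ) {C : Set ℝ} (hC : MeasurableSet C) :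
    IsProbabilityMeasure (concentration μ C) ∧ IsFinitelySupported (concentration μ C) := by
  obtain ⟨S, hS, hμS⟩ := hμ
  set a := (∫ t in C, leftQuantile μ t) / (volume C).toReal
  -- `leftQuantile μ 0 = sInf univ` is a junk value, so we work on `(0, 1]`
  have hF : AEMeasurable (leftQuantile μ) unif01 := by
    rw [unif01_eq_restrict_Ioc]
    exact aemeasurable_restrict_of_monotoneOn measurableSet_Ioc
      (leftQuantile_monotoneOn hS.isBounded hμS)
  have hg : AEMeasurable (fun u => if u ∈ C then a else leftQuantile μ u) unif01 :=
    ⟨fun u => if u ∈ C then a else hF.mk _ u, measurable_const.ite hC hF.measurable_mk,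
      hF.ae_eq_mk.mono fun u hu => by simp only [hu]⟩
  refine ⟨Measure.isProbabilityMeasure_map hg, insert a S, hS.insert a, ?_⟩
  refine (ae_map_iff hg (hS.insert a).measurableSet).2 ?_
  rw [unif01_eq_restrict_Ioc]
  filter_upwards [ae_restrict_mem measurableSet_Ioc] with u hu
  split_ifs
  · exact mem_insert a S
  · exact mem_insert_of_mem a (leftQuantile_mem hS hμS hu)

lemma condExp_comap_fst_ae_eq {α β : Type*} [MeasurableSpace α] [MeasurableSpace β]
    {μ : Measure α} {ν : Measure β} [IsFiniteMeasure μ] [IsProbabilityMeasure ν]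
    {f : α × β → ℝ} (hf : Integrable f (μ.prod ν)) :
    (μ.prod ν)[f | MeasurableSpace.comap Prod.fst ‹MeasurableSpace α›] =ᵐ[μ.prod ν]
      fun z => ∫ y, f (z.1, y) ∂ν := by
  have hF := hf.integral_prod_left
  refine (ae_eq_condExp_of_forall_setIntegral_eq measurable_fst.comap_le hf
    (fun _ _ _ => (hF.comp_fst ν).integrableOn) ?_ ?_).symm
  · rintro _ ⟨t, -, rfl⟩ -
    rw [← prod_univ, setIntegral_prod _ (hF.comp_fst ν).integrableOn,
      setIntegral_prod _ hf.integrableOn]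
    simp
  · exact ⟨fun z => hF.1.mk _ z.1,
      hF.1.stronglyMeasurable_mk.comp_measurable (comap_measurable Prod.fst),
      Measure.quasiMeasurePreserving_fst.ae_eq_comp hF.1.ae_eq_mk⟩

lemma unif01_real_Iio {x : ℝ} (hx : x ∈ Icc 0 1) : unif01.real (Iio x) = x := by
  have h : Iio x ∩ Icc 0 1 = Ico 0 x := by
    ext y
    simp only [mem_inter_iff, mem_Iio, mem_Icc, mem_Ico]
    exact ⟨fun hy => ⟨hy.2.1, hy.1⟩, fun hy => ⟨hy.2, hy.1, by linarith [hx.2]⟩⟩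
  rw [measureReal_def, unif01, Measure.restrict_apply measurableSet_Iio, h, Real.volume_Ico,
    sub_zero, ENNReal.toReal_ofReal hx.1]

lemma condExp_indicator_snd_lt_fst :
    (unif01.prod unif01)[{z : ℝ × ℝ | z.2 < z.1}.indicator 1 |
      MeasurableSpace.comap Prod.fst Real.measurableSpace] =ᵐ[unif01.prod unif01] Prod.fst := by
  have hA : MeasurableSet {z : ℝ × ℝ | z.2 < z.1} := measurableSet_lt measurable_snd measurable_fst
  refine (condExp_comap_fst_ae_eq ((integrable_const 1).indicator hA)).trans ?_
  filter_upwards [Measure.quasiMeasurePreserving_fst.ae (ae_restrict_mem measurableSet_Icc)]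
    with z hz
  change ∫ y, (Iio z.1).indicator 1 y ∂unif01 = z.1
  rw [integral_indicator_one measurableSet_Iio, unif01_real_Iio hz]

/-- there is a set of distributions (of integrable random variables) closed
under concentration but not closed under conditional expectation. -/
theorem exists_closedUnderConcentration_not_closedUnderCondExp :
    ∃ M : Set (Measure ℝ),
      (∀ μ ∈ M, IsProbabilityMeasure μ ∧ Integrable id μ) ∧
      ClosedUnderConcentration M ∧ ¬ ClosedUnderCondExp M := by
  refine ⟨{μ | IsProbabilityMeasure μ ∧ IsFinitelySupported μ},
    fun μ ⟨_, hμ⟩ => ⟨‹_›, hμ.integrable_id⟩, ?_, ?_⟩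
  · rintro μ ⟨_, hμ⟩ C hC -
    exact concentration_isProbabilityMeasure_and_isFinitelySupported hμ hC.measurableSet
  · intro h
    have hA : MeasurableSet {z : ℝ × ℝ | z.2 < z.1} :=
      measurableSet_lt measurable_snd measurable_fst
    have hY : Measurable ({z : ℝ × ℝ | z.2 < z.1}.indicator (1 : ℝ × ℝ → ℝ)) :=
      measurable_one.indicator hA
    have hEY := h (ℝ × ℝ) (unif01.prod unif01) inferInstance _ hY
      ((integrable_const 1).indicator hA)
      ⟨Measure.isProbabilityMeasure_map hY.aemeasurable, isFinitelySupported_map_indicator_one hA⟩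
      _ measurable_fst.comap_le
    rw [Measure.map_congr condExp_indicator_snd_lt_fst, Measure.map_fst_prod, measure_univ,
      one_smul] at hEY
    exact not_isFinitelySupported unif01 hEY.2
end

section
/- Let h: [0,1] → ℝ be a function of bounded variation with h(0) = 0, and let ĥ be its upper semicontinuous modification (ĥ(t) = max{h(t⁻), h(t), h(t⁺)} at interior discontinuity points, ĥ = h elsewhere). Then the concave envelopes satisfy h* = (ĥ)* on [0,1]. -/
open MeasureTheory Set Classical

/-- The concave envelope of `h` on `[0,1]`: pointwise infimum of all concave functions `g`
on `[0,1]` with `g 0 = 0` dominating `h`. -/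
noncomputable def concaveEnvelope (h : ℝ → ℝ) : ℝ → ℝ := fun t =>
  sInf {y : ℝ | ∃ g : ℝ → ℝ, ConcaveOn ℝ (Icc 0 1) g ∧ g 0 = 0 ∧
      (∀ s ∈ Icc (0:ℝ) 1, h s ≤ g s) ∧ y = g t}

/-- The convex envelope of `h` on `[0,1]`: pointwise supremum of all convex functions `g`
on `[0,1]` with `g 0 = 0` dominated by `h`. -/
noncomputable def convexEnvelope (h : ℝ → ℝ) : ℝ → ℝ := fun t =>
  sSup {y : ℝ | ∃ g : ℝ → ℝ, ConvexOn ℝ (Icc 0 1) g ∧ g 0 = 0 ∧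
      (∀ s ∈ Icc (0:ℝ) 1, g s ≤ h s) ∧ y = g t}

/-- The upper semicontinuous modification `ĥ` of `h`: at interior points, the maximum of
`h(t⁻)`, `h(t⁺)` and `h(t)`; no modification at `0` and `1`. -/
noncomputable def uscMod (h : ℝ → ℝ) : ℝ → ℝ := fun t =>
  if t ∈ Ioo (0:ℝ) 1 then max (max (Function.leftLim h t) (Function.rightLim h t)) (h t)
  else h t

/-! A concave majorant of `h` on `[0,1]` is continuous on `(0,1)`, so it also dominates the
one-sided limits of `h` there, i.e. it is a majorant of `ĥ`. Hence `h` and `ĥ` have the same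
concave majorants, and the same envelope. -/

open Filter Topology Function

section LeftRightLim

variable {α β : Type*} [LinearOrder α] [TopologicalSpace α] [OrderTopology α]
  [LinearOrder β] [TopologicalSpace β] [OrderClosedTopology β] {f g : α → β} {a : α}

theorem leftLim_le_of_eventuallyLE (hg : ContinuousAt g a) (hfg : f ≤ᶠ[𝓝 a] g) :
    leftLim f a ≤ g a := by
  rcases eq_or_neBot (𝓝[<] a) with hbot | _
  · exact (leftLim_eq_of_eq_bot f hbot).trans_le hfg.self_of_nhds
  by_cases hf : ∃ y, Tendsto f (𝓝[<] a) (𝓝 y)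
  · exact le_of_tendsto_of_tendsto (tendsto_leftLim_of_tendsto hf)
      (hg.tendsto.mono_left nhdsWithin_le_nhds) (hfg.filter_mono nhdsWithin_le_nhds)
  · exact (leftLim_eq_of_not_tendsto f hf).trans_le hfg.self_of_nhds

theorem rightLim_le_of_eventuallyLE (hg : ContinuousAt g a) (hfg : f ≤ᶠ[𝓝 a] g) :
    rightLim f a ≤ g a :=
  leftLim_le_of_eventuallyLE (α := αᵒᵈ) hg hfg

end LeftRightLim

theorem le_uscMod (h : ℝ → ℝ) (s : ℝ) : h s ≤ uscMod h s := by
  unfold uscMod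
  split_ifs
  exacts [le_max_right _ _, le_rfl]

theorem uscMod_le_of_continuousOn {h g : ℝ → ℝ} (hg : ContinuousOn g (Ioo 0 1))
    (hhg : ∀ s ∈ Icc (0:ℝ) 1, h s ≤ g s) : ∀ s ∈ Icc (0:ℝ) 1, uscMod h s ≤ g s := by
  intro s hs
  unfold uscMod
  split_ifs with hs'
  · have hgs : ContinuousAt g s := hg.continuousAt (isOpen_Ioo.mem_nhds hs')
    have hle : h ≤ᶠ[𝓝 s] g := eventually_of_mem (Icc_mem_nhds hs'.1 hs'.2) hhg
    exact max_le (max_le (leftLim_le_of_eventuallyLE hgs hle)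
      (rightLim_le_of_eventuallyLE hgs hle)) (hhg s hs)
  · exact hhg s hs

theorem ConcaveOn.uscMod_le_iff {h g : ℝ → ℝ} (hg : ConcaveOn ℝ (Icc 0 1) g) :
    (∀ s ∈ Icc (0:ℝ) 1, uscMod h s ≤ g s) ↔ ∀ s ∈ Icc (0:ℝ) 1, h s ≤ g s := by
  refine ⟨fun hle s hs => (le_uscMod h s).trans (hle s hs), uscMod_le_of_continuousOn ?_⟩
  simpa only [interior_Icc] using hg.continuousOn_interior

theorem concaveEnvelope_uscMod_general (h : ℝ → ℝ) :
    ∀ t ∈ Icc (0:ℝ) 1, concaveEnvelope h t = concaveEnvelope (uscMod h) t := by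
  intro t _
  unfold concaveEnvelope
  refine congrArg sInf (Set.ext fun y => exists_congr fun g => ?_)
  exact and_congr_right fun hg => and_congr_right fun _ => and_congr_left fun _ =>
    hg.uscMod_le_iff.symm

/-- the concave envelopes of `h` and of its upper semicontinuous
modification `ĥ` coincide on `[0,1]`. -/
theorem concaveEnvelope_uscMod (h : ℝ → ℝ) (hbv : BoundedVariationOn h (Icc 0 1))
    (h0 : h 0 = 0) :
    ∀ t ∈ Icc (0:ℝ) 1, concaveEnvelope h t = concaveEnvelope (uscMod h) t :=
  concaveEnvelope_uscMod_general h
end
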